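/- arXiv:2002.02041 — 3 statements merged into one kernel-verified Lean document; each statement's English description precedes it below -/
import Mathlib

section
/- Let M ∈ ℝ^{m×n}, let Ω ⊆ {1,…,m}×{1,…,n} be a set of observed indices, let W ∈ ℝ^{m×m} be positive semidefinite with positive semidefinite square root W^{1/2}, let α > 0, and let ‖·‖ be any norm on ℝ^{m×n}. Suppose X̃ ∈ ℝ^{m×n} minimizes ‖W^{1/2}X‖_F² over all X with P_Ω(X) = P_Ω(M), and X̂ ∈ ℝ^{m×n} minimizes ‖W^{1/2}X‖_F² + α·‖P_{Ω^c}(X)‖² over all X with P_Ω(X) = P_Ω(M) (in particular both X̃ and X̂ satisfy the constraint). If P_{Ω^c}(M) = 0 (all unobserved entries of M are zero), then ‖M − X̂‖ ≤ ‖M − X̃‖. -/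
/-- The sampling operator `P_Ω` keeping the entries in `Ω` and zeroing out the rest. -/
def sampOp {m n : ℕ} (Ω : Finset (Fin m × Fin n)) (X : Matrix (Fin m) (Fin n) ℝ) :
    Matrix (Fin m) (Fin n) ℝ :=
  Matrix.of fun i j => if (i, j) ∈ Ω then X i j else 0

/-- The squared Frobenius norm `‖X‖_F² = Σ_{i,j} x_{ij}²`. -/
def frobSq {m n : ℕ} (X : Matrix (Fin m) (Fin n) ℝ) : ℝ :=
  ∑ i, ∑ j, (X i j) ^ 2

/-- If all unobserved entries of `M` are zero, the minimizer `X̂` of the regularized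
objective recovers `M` at least as well (in any norm) as the minimizer `X̃` of the
unregularized objective. -/
theorem structured_iterate_better {m n : ℕ}
    (M Xtilde Xhat : Matrix (Fin m) (Fin n) ℝ)
    (Ω : Finset (Fin m × Fin n))
    (W Wsqrt : Matrix (Fin m) (Fin m) ℝ)
    (hW : W.PosSemidef) (hWsqrt : Wsqrt.PosSemidef) (hsq : Wsqrt * Wsqrt = W)
    (α : ℝ) (hα : 0 < α)
    (N : Matrix (Fin m) (Fin n) ℝ → ℝ)
    (hN_zero : N 0 = 0)
    (hN_add : ∀ X Y, N (X + Y) ≤ N X + N Y)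
    (hN_smul : ∀ (c : ℝ) (X : Matrix (Fin m) (Fin n) ℝ), N (c • X) = |c| * N X)
    (hN_def : ∀ X, N X = 0 → X = 0)
    (hXt_mem : sampOp Ω Xtilde = sampOp Ω M)
    (hXt_min : ∀ X : Matrix (Fin m) (Fin n) ℝ, sampOp Ω X = sampOp Ω M →
      frobSq (Wsqrt * Xtilde) ≤ frobSq (Wsqrt * X))
    (hXh_mem : sampOp Ω Xhat = sampOp Ω M)
    (hXh_min : ∀ X : Matrix (Fin m) (Fin n) ℝ, sampOp Ω X = sampOp Ω M →
      frobSq (Wsqrt * Xhat) + α * (N (sampOp Ωᶜ Xhat)) ^ 2 ≤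
        frobSq (Wsqrt * X) + α * (N (sampOp Ωᶜ X)) ^ 2)
    (hM_zero : sampOp Ωᶜ M = 0) :
    N (M - Xhat) ≤ N (M - Xtilde) := by
  -- key: for X satisfying the constraint, M - X = (-1) • sampOp Ωᶜ X
  have key : ∀ X : Matrix (Fin m) (Fin n) ℝ, sampOp Ω X = sampOp Ω M →
      M - X = (-1 : ℝ) • sampOp Ωᶜ X := by
    intro X hX
    ext i j
    have h1 := congrFun (congrFun hX i) j
    have h2 := congrFun (congrFun hM_zero i) j
    simp only [sampOp, Matrix.of_apply, Finset.mem_compl, Matrix.zero_apply] at h1 h2 ⊢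
    by_cases h : (i, j) ∈ Ω
    · simp [h, h1] at *
      simp [Matrix.sub_apply, h1]
    · simp [h] at h1 h2 ⊢
      simp [Matrix.sub_apply, h2]
  -- N is nonneg
  have hN_nonneg : ∀ X, 0 ≤ N X := by
    intro X
    have := hN_add X ((-1 : ℝ) • X)
    rw [hN_smul] at this
    simp at this
    nlinarith [this, hN_zero ▸ this]
  have hNt : N (M - Xtilde) = N (sampOp Ωᶜ Xtilde) := by
    rw [key Xtilde hXt_mem, hN_smul]; simp
  have hNh : N (M - Xhat) = N (sampOp Ωᶜ Xhat) := by
    rw [key Xhat hXh_mem, hN_smul]; simp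
  have h1 := hXh_min Xtilde hXt_mem
  have h2 := hXt_min Xhat hXh_mem
  rw [hNt, hNh]
  have h3 : α * N (sampOp Ωᶜ Xhat) ^ 2 ≤ α * N (sampOp Ωᶜ Xtilde) ^ 2 := by linarith
  have h4 : N (sampOp Ωᶜ Xhat) ^ 2 ≤ N (sampOp Ωᶜ Xtilde) ^ 2 :=
    le_of_mul_le_mul_left h3 hα
  nlinarith [hN_nonneg (sampOp Ωᶜ Xtilde), hN_nonneg (sampOp Ωᶜ Xhat), h4]
end

section
/- Let γ ≥ 0 and p ≥ 1. The smooth Schatten-p function f_p : ℝ^{m×n} → ℝ defined by f_p(X) = Tr((XᵀX + γI)^{p/2}) = Σ_{i=1}^n (λ_i(XᵀX) + γ)^{p/2}, where λ_i(XᵀX) are the eigenvalues of XᵀX and the matrix power is taken via the spectral functional calculus, is a convex function of X on all of ℝ^{m×n}. -/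
/-!
The eigenvalues of the Hermitian dilation `D(X) = [[0, X], [Xᵀ, 0]]` are `±√λᵢ(XᵀX)` together
with zeros, so for the even function `ψ(μ) = (μ² + γ)^(p/2)` the spectral sum `∑ₖ ψ(λₖ(D(X)))`
equals `2 f_p(X)` up to an additive constant. Since `ψ = ‖(μ, √γ)‖^p` is convex and `D` is linear,
the convexity of `X ↦ ∑ₖ ψ(λₖ(D(X)))` follows from Peierls' inequality: the diagonal of a
Hermitian matrix in any orthonormal basis is a doubly stochastic average of its eigenvalues.
-/

open Matrix Polynomial
open scoped InnerProductSpace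

theorem ConvexOn.rpow {E : Type*} [AddCommGroup E] [Module ℝ E] {s : Set E} {f : E → ℝ}
    (hf : ConvexOn ℝ s f) (hf₀ : ∀ x ∈ s, 0 ≤ f x) {p : ℝ} (hp : 1 ≤ p) :
    ConvexOn ℝ s fun x => f x ^ p :=
  ⟨hf.1, fun x hx y hy a b ha hb hab =>
    (Real.rpow_le_rpow (hf₀ _ (hf.1 hx hy ha hb hab)) (hf.2 hx hy ha hb hab) (by linarith)).trans
      ((convexOn_rpow hp).2 (hf₀ x hx) (hf₀ y hy) ha hb hab)⟩

theorem convexOn_sqrt_sq_add_sq (c : ℝ) : ConvexOn ℝ Set.univ fun μ : ℝ => √(μ ^ 2 + c ^ 2) := by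
  have := ((convexOn_norm convex_univ).translate_right ((c : ℂ) * Complex.I)).comp_linearMap
    Complex.ofRealCLM.toLinearMap
  simpa [Function.comp_def, add_comm, Complex.norm_add_mul_I] using this

theorem convexOn_rpow_sq_add {γ p : ℝ} (hγ : 0 ≤ γ) (hp : 1 ≤ p) :
    ConvexOn ℝ Set.univ fun μ : ℝ => (μ ^ 2 + γ) ^ (p / 2) := by
  have h := (convexOn_sqrt_sq_add_sq √γ).rpow (fun _ _ => Real.sqrt_nonneg _) hp
  refine (by simpa only [Real.sq_sqrt hγ] using h : ConvexOn ℝ _ _).congr fun μ _ => ?_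
  rw [Real.sqrt_eq_rpow, ← Real.rpow_mul (by positivity)]
  ring_nf

section Peierls

variable {𝕜 E ι κ : Type*} [RCLike 𝕜] [NormedAddCommGroup E] [InnerProductSpace 𝕜 E]
  [Fintype ι] [Fintype κ]

theorem OrthonormalBasis.re_inner_apply_self_eq_sum {T : E →ₗ[𝕜] E} (v : OrthonormalBasis ι 𝕜 E)
    {μ : ι → ℝ} (hv : ∀ j, T (v j) = (μ j : 𝕜) • v j) (w : E) :
    RCLike.re ⟪w, T w⟫_𝕜 = ∑ j, ‖⟪v j, w⟫_𝕜‖ ^ 2 * μ j := by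
  have hTw : T w = ∑ j, ⟪v j, w⟫_𝕜 • (μ j : 𝕜) • v j := by
    conv_lhs => rw [← v.sum_repr' w]
    simp only [map_sum, map_smul, hv]
  simp only [hTw, inner_sum, inner_smul_right, map_sum]
  refine Finset.sum_congr rfl fun j _ => ?_
  rw [← inner_conj_symm w, mul_left_comm, RCLike.mul_conj, ← RCLike.ofReal_pow,
    ← RCLike.ofReal_mul, RCLike.ofReal_re, mul_comm]

/-- Peierls' inequality. -/
theorem ConvexOn.sum_comp_re_inner_le {ψ : ℝ → ℝ} (hψ : ConvexOn ℝ Set.univ ψ) {T : E →ₗ[𝕜] E}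
    (v : OrthonormalBasis ι 𝕜 E) {μ : ι → ℝ} (hv : ∀ j, T (v j) = (μ j : 𝕜) • v j)
    (u : OrthonormalBasis κ 𝕜 E) :
    ∑ i, ψ (RCLike.re ⟪u i, T (u i)⟫_𝕜) ≤ ∑ j, ψ (μ j) := by
  have hrow (i : κ) : ∑ j, ‖⟪v j, u i⟫_𝕜‖ ^ 2 = 1 := by
    rw [v.sum_sq_norm_inner_right, u.orthonormal.1 i, one_pow]
  have hcol (j : ι) : ∑ i, ‖⟪v j, u i⟫_𝕜‖ ^ 2 = 1 := by
    rw [u.sum_sq_norm_inner_left, v.orthonormal.1 j, one_pow]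
  calc ∑ i, ψ (RCLike.re ⟪u i, T (u i)⟫_𝕜)
      = ∑ i, ψ (∑ j, ‖⟪v j, u i⟫_𝕜‖ ^ 2 • μ j) := by
        simp only [v.re_inner_apply_self_eq_sum hv, smul_eq_mul]
    _ ≤ ∑ i, ∑ j, ‖⟪v j, u i⟫_𝕜‖ ^ 2 • ψ (μ j) :=
        Finset.sum_le_sum fun i _ =>
          hψ.map_sum_le (fun j _ => by positivity) (hrow i) fun j _ => Set.mem_univ _
    _ = ∑ j, ψ (μ j) := by
        rw [Finset.sum_comm]
        simp only [← Finset.sum_smul, hcol, one_smul]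

end Peierls

namespace Matrix

section SpectralSum

variable {𝕜 ι : Type*} [RCLike 𝕜] [Fintype ι] [DecidableEq ι]

theorem IsHermitian.toLpLin_eigenvectorBasis {A : Matrix ι ι 𝕜} (hA : A.IsHermitian) (j : ι) :
    toLpLin 2 2 A (hA.eigenvectorBasis j) = (hA.eigenvalues j : 𝕜) • hA.eigenvectorBasis j :=
  WithLp.ofLp_injective 2 <| by
    rw [ofLp_toLpLin, toLin'_apply, hA.mulVec_eigenvectorBasis, WithLp.ofLp_smul,
      RCLike.real_smul_eq_coe_smul (K := 𝕜)]

theorem IsHermitian.eigenvalues_eq_re_inner {A : Matrix ι ι 𝕜} (hA : A.IsHermitian) (j : ι) :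
    hA.eigenvalues j =
      RCLike.re ⟪hA.eigenvectorBasis j, toLpLin 2 2 A (hA.eigenvectorBasis j)⟫_𝕜 := by
  rw [hA.toLpLin_eigenvectorBasis, inner_smul_right, inner_self_eq_norm_sq_to_K,
    hA.eigenvectorBasis.orthonormal.1 j]
  simp

theorem convexOn_sum_comp_eigenvalues {V : Type*} [AddCommGroup V] [Module ℝ V]
    {ψ : ℝ → ℝ} (hψ : ConvexOn ℝ Set.univ ψ) (L : V →ₗ[ℝ] Matrix ι ι 𝕜)
    (hL : ∀ x, (L x).IsHermitian) :
    ConvexOn ℝ Set.univ fun x => ∑ i, ψ ((hL x).eigenvalues i) := by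
  refine ⟨convex_univ, fun x _ y _ a b ha hb hab => ?_⟩
  set u := (hL (a • x + b • y)).eigenvectorBasis
  have hsplit (k : ι) : (hL (a • x + b • y)).eigenvalues k =
      a * RCLike.re ⟪u k, toLpLin 2 2 (L x) (u k)⟫_𝕜 +
        b * RCLike.re ⟪u k, toLpLin 2 2 (L y) (u k)⟫_𝕜 := by
    rw [IsHermitian.eigenvalues_eq_re_inner]
    change RCLike.re ⟪u k, toLpLin 2 2 (L (a • x + b • y)) (u k)⟫_𝕜 = _
    simp only [map_add, RCLike.real_smul_eq_coe_smul (K := 𝕜), map_smul, LinearMap.add_apply,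
      LinearMap.smul_apply, inner_add_right, inner_smul_right, RCLike.re_ofReal_mul]
  calc ∑ k, ψ ((hL (a • x + b • y)).eigenvalues k)
      ≤ ∑ k, (a * ψ (RCLike.re ⟪u k, toLpLin 2 2 (L x) (u k)⟫_𝕜) +
          b * ψ (RCLike.re ⟪u k, toLpLin 2 2 (L y) (u k)⟫_𝕜)) :=
        Finset.sum_le_sum fun k _ => hsplit k ▸ hψ.2 trivial trivial ha hb hab
    _ = a * ∑ k, ψ (RCLike.re ⟪u k, toLpLin 2 2 (L x) (u k)⟫_𝕜) +
          b * ∑ k, ψ (RCLike.re ⟪u k, toLpLin 2 2 (L y) (u k)⟫_𝕜) := by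
        rw [Finset.sum_add_distrib, Finset.mul_sum, Finset.mul_sum]
    _ ≤ a * ∑ i, ψ ((hL x).eigenvalues i) + b * ∑ i, ψ ((hL y).eigenvalues i) := by
        gcongr ?_ * ?_ + ?_ * ?_
        · exact hψ.sum_comp_re_inner_le _ (hL x).toLpLin_eigenvectorBasis u
        · exact hψ.sum_comp_re_inner_le _ (hL y).toLpLin_eigenvectorBasis u

end SpectralSum

section Dilation

variable {R : Type*} [CommRing R] {m n : Type*}

def dilation : Matrix m n R →ₗ[R] Matrix (m ⊕ n) (m ⊕ n) R where
  toFun A := fromBlocks 0 A Aᵀ 0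
  map_add' A B := by simp [fromBlocks_add]
  map_smul' c A := by simp [fromBlocks_smul]

theorem dilation_apply (A : Matrix m n R) : dilation A = fromBlocks 0 A Aᵀ 0 := rfl

theorem isHermitian_dilation (A : Matrix m n ℝ) : (dilation A).IsHermitian :=
  .fromBlocks isHermitian_zero (conjTranspose_eq_transpose_of_trivial A) isHermitian_zero

variable [Fintype m] [Fintype n] [DecidableEq n]

theorem eigenvalues_transpose_mul_self_nonneg {A : Matrix m n ℝ} (hA : (Aᵀ * A).IsHermitian)
    (i : n) : 0 ≤ hA.eigenvalues i :=
  (posSemidef_conjTranspose_mul_self A).eigenvalues_nonneg i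

variable [DecidableEq m]

theorem charpoly_comp (M : Matrix n n R) (q : R[X]) :
    M.charpoly.comp q = det (scalar n q - M.map C) := by
  rw [charpoly, ← coe_compRingHom_apply, RingHom.map_det]
  congr 1
  ext i j
  by_cases h : i = j <;> simp [h]

theorem charpoly_fromBlocks_zero₁₁_zero₂₂ (A : Matrix m n R) (B : Matrix n m R) :
    X ^ Fintype.card n * (fromBlocks 0 A B 0).charpoly =
      X ^ Fintype.card m * (B * A).charpoly.comp (X ^ 2) := by
  have hmul : charmatrix (fromBlocks 0 A B 0) * fromBlocks 1 (A.map C) 0 (scalar n X) =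
      fromBlocks (scalar m X) 0 (-B.map C) (scalar n (X ^ 2) - (B * A).map C) := by
    rw [charmatrix_fromBlocks, fromBlocks_multiply]
    simp only [charmatrix, scalar_apply, map_zero, sub_eq_add_neg, neg_zero, add_zero, mul_one,
      Matrix.mul_zero, Matrix.neg_mul, Matrix.mul_one, diagonal_mul_diagonal, sq, Matrix.map_mul,
      fromBlocks_inj, true_and]
    refine ⟨?_, add_comm _ _⟩
    rw [← smul_eq_diagonal_mul, ← op_smul_eq_mul_diagonal, op_smul_eq_smul, add_neg_cancel]
  have := congrArg det hmul
  rw [det_mul, det_fromBlocks_zero₂₁, det_fromBlocks_zero₁₂, ← charpoly_comp] at this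
  simpa [charpoly, mul_comm] using this

theorem IsHermitian.charpoly_eq_multiset_prod {A : Matrix n n ℝ} (hA : A.IsHermitian) :
    A.charpoly = ((Finset.univ.val.map hA.eigenvalues).map fun a => X - C a).prod := by
  rw [hA.charpoly_eq, Finset.prod_eq_multiset_prod, Multiset.map_map]
  rfl

theorem IsHermitian.eigenvalues_dilation {A : Matrix m n ℝ} (hD : (dilation A).IsHermitian)
    (hA : (Aᵀ * A).IsHermitian) :
    Multiset.replicate (Fintype.card n) 0 + Finset.univ.val.map hD.eigenvalues =
      Multiset.replicate (Fintype.card m) 0 + Finset.univ.val.map (fun i => √(hA.eigenvalues i)) +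
        Finset.univ.val.map (fun i => -√(hA.eigenvalues i)) := by
  refine (roots_multiset_prod_X_sub_C _).symm.trans
    ((congrArg roots ?_).trans (roots_multiset_prod_X_sub_C _))
  have hsq : (Aᵀ * A).charpoly.comp (X ^ 2) =
      ((Finset.univ.val.map fun i => √(hA.eigenvalues i)).map fun a => X - C a).prod *
        ((Finset.univ.val.map fun i => -√(hA.eigenvalues i)).map fun a => X - C a).prod := by
    simp only [Multiset.map_map, ← Finset.prod_eq_multiset_prod, ← Finset.prod_mul_distrib,
      hA.charpoly_eq, prod_comp]
    refine Finset.prod_congr rfl fun i _ => ?_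
    rw [sub_comp, X_comp, C_comp, RCLike.ofReal_real_eq_id, id,
      ← Real.sq_sqrt (eigenvalues_transpose_mul_self_nonneg hA i), C_pow]
    simp only [Function.comp_apply, C_neg]
    ring
  rw [Multiset.map_add, Multiset.map_add, Multiset.map_add, Multiset.prod_add, Multiset.prod_add,
    Multiset.prod_add, ← hD.charpoly_eq_multiset_prod, mul_assoc, ← hsq, Multiset.map_replicate,
    Multiset.map_replicate, Multiset.prod_replicate, Multiset.prod_replicate, map_zero, sub_zero]
  exact charpoly_fromBlocks_zero₁₁_zero₂₂ A Aᵀ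

theorem IsHermitian.sum_eigenvalues_dilation {A : Matrix m n ℝ} (hD : (dilation A).IsHermitian)
    (hA : (Aᵀ * A).IsHermitian) (g : ℝ → ℝ) :
    ∑ k, g (hD.eigenvalues k) + Fintype.card n * g 0 =
      ∑ i, (g √(hA.eigenvalues i) + g (-√(hA.eigenvalues i))) + Fintype.card m * g 0 := by
  have := congrArg (fun M => (M.map g).sum) (hD.eigenvalues_dilation hA)
  simp only [Multiset.map_add, Multiset.sum_add, Multiset.map_replicate, Multiset.sum_replicate,
    Multiset.map_map, Function.comp_apply, ← Finset.sum_eq_multiset_sum, nsmul_eq_mul] at this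
  rw [Finset.sum_add_distrib]
  linarith

end Dilation

end Matrix

/-- For `γ ≥ 0` and `p ≥ 1`, the smooth Schatten-p function
`f_p(X) = Tr((XᵀX + γI)^{p/2}) = Σ_i (λ_i(XᵀX) + γ)^{p/2}` is convex on `ℝ^{m×n}`. -/
theorem smooth_schatten_convex {m n : ℕ} (γ p : ℝ) (hγ : 0 ≤ γ) (hp : 1 ≤ p)
    (hH : ∀ X : Matrix (Fin m) (Fin n) ℝ, (Xᵀ * X).IsHermitian) :
    ConvexOn ℝ Set.univ
      (fun X : Matrix (Fin m) (Fin n) ℝ =>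
        ∑ i, ((hH X).eigenvalues i + γ) ^ (p / 2)) := by
  set ψ : ℝ → ℝ := fun μ => (μ ^ 2 + γ) ^ (p / 2)
  have hF := convexOn_sum_comp_eigenvalues (convexOn_rpow_sq_add hγ hp)
    (dilation (m := Fin m) (n := Fin n)) isHermitian_dilation
  refine ((hF.add_const (((n : ℝ) - m) * ψ 0)).smul (by norm_num : (0 : ℝ) ≤ 1 / 2)).congr
    fun X _ => ?_
  have hψ (i : Fin n) : ψ √((hH X).eigenvalues i) + ψ (-√((hH X).eigenvalues i)) =
      2 * ((hH X).eigenvalues i + γ) ^ (p / 2) := by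
    simp only [ψ, neg_sq, Real.sq_sqrt (eigenvalues_transpose_mul_self_nonneg (hH X) i)]
    ring
  have := (isHermitian_dilation X).sum_eigenvalues_dilation (hH X) ψ
  simp only [hψ, ← Finset.mul_sum, Fintype.card_fin] at this
  simp only [smul_eq_mul, Pi.add_apply]
  linarith
end

section
/- Let γ > 0 and p > 0. The smooth Schatten-p function f_p : ℝ^{m×n} → ℝ defined by f_p(X) = Tr((XᵀX + γI)^{p/2}), where the matrix power is taken via the spectral functional calculus applied to the symmetric positive definite matrix XᵀX + γI, is differentiable as a function of X on all of ℝ^{m×n}. -/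
open Matrix

attribute [local instance] Matrix.normedAddCommGroup Matrix.normedSpace

/-!
For a polynomial `q`, the derivative of `A ↦ Tr (q A)` is `H ↦ Tr (q' A * H)`. Near a point `X₀`
the spectra of `XᵀX + γI` stay in a compact interval `[γ, b] ⊂ (0, ∞)`, on which `t ↦ t ^ (p / 2)`
is `C¹` and hence `C¹`-approximable by polynomials `q_j`. The derivatives `Tr (q_j' A * ·)` then
converge uniformly near `X₀`, and a uniform limit of derivatives is the derivative of the limit.
-/

open Polynomial Set Filter Topology

theorem Polynomial.exists_derivative_eq {K : Type*} [Field K] [CharZero K] (r : K[X]) :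
    ∃ P : K[X], derivative P = r := by
  induction r using Polynomial.induction_on' with
  | add r s hr hs =>
    obtain ⟨P, rfl⟩ := hr
    obtain ⟨Q, rfl⟩ := hs
    exact ⟨P + Q, derivative_add⟩
  | monomial k c =>
    refine ⟨monomial (k + 1) (c / (k + 1)), ?_⟩
    rw [derivative_monomial, Nat.add_sub_cancel]
    congr 1
    push_cast
    field_simp

theorem exists_polynomial_near_and_derivative_near {a b ε : ℝ} {f f' : ℝ → ℝ}
    (hf : ∀ x ∈ Icc a b, HasDerivAt f (f' x) x) (hf' : ContinuousOn f' (Icc a b)) (hε : 0 < ε) :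
    ∃ q : ℝ[X], ∀ x ∈ Icc a b, |q.eval x - f x| ≤ ε ∧ |q.derivative.eval x - f' x| ≤ ε := by
  rcases lt_or_ge b a with hba | hab
  · exact ⟨0, fun x hx => absurd (hx.1.trans hx.2) (not_le.2 hba)⟩
  -- approximate `f'` to within `ε / (b - a + 1)`, so that integrating over `[a, b]` costs `ε`
  have hlen : 0 < b - a + 1 := by linarith
  obtain ⟨r, hr⟩ := exists_polynomial_near_of_continuousOn a b f' hf' _ (div_pos hε hlen)
  obtain ⟨P, hP⟩ := r.exists_derivative_eq
  set q := P + C (f a - P.eval a)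
  have hq : derivative q = r := by simp [q, hP]
  have hr' : ∀ x ∈ Icc a b, |r.eval x - f' x| ≤ ε / (b - a + 1) := fun x hx => (hr x hx).le
  have hmvt := norm_image_sub_le_of_norm_deriv_le_segment'
    (f := fun x => q.eval x - f x) (fun x hx => ((q.hasDerivAt x).sub (hf x hx)).hasDerivWithinAt)
    (fun x hx => by rw [hq]; exact hr' x (Ico_subset_Icc_self hx))
  refine ⟨q, fun x hx => ⟨?_, ?_⟩⟩
  · have hqa : q.eval a - f a = 0 := by simp [q]
    have := hmvt x hx
    rw [hqa, sub_zero, Real.norm_eq_abs] at this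
    calc |q.eval x - f x| ≤ ε / (b - a + 1) * (x - a) := this
      _ ≤ ε / (b - a + 1) * (b - a + 1) := by gcongr; linarith [hx.2]
      _ = ε := div_mul_cancel₀ ε hlen.ne'
  · rw [hq]
    exact (hr' x hx).trans (div_le_self hε.le (by linarith))

theorem tendstoUniformlyOnFilter_of_dist_le {ι α β : Type*} [PseudoMetricSpace β]
    {l : Filter ι} {p : Filter α} {F : ι → α → β} {f : α → β} {u : ι → ℝ}
    (hu : Tendsto u l (𝓝 0)) (h : ∀ᶠ x in p, ∀ j, dist (f x) (F j x) ≤ u j) :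
    TendstoUniformlyOnFilter F f l p := by
  refine Metric.tendstoUniformlyOnFilter_iff.2 fun ε hε => ?_
  filter_upwards [(hu.eventually_lt_const hε).prod_mk h] with ⟨j, x⟩ ⟨hj, hx⟩
  exact (hx j).trans_lt hj

theorem ContDiffAt.exists_eventually_norm_fderiv_apply_le {𝕜 E G : Type*}
    [NontriviallyNormedField 𝕜] [NormedAddCommGroup E] [NormedSpace 𝕜 E]
    [NormedAddCommGroup G] [NormedSpace 𝕜 G] {F : E → G} {x₀ : E} (hF : ContDiffAt 𝕜 1 F x₀) :
    ∃ C ≥ 0, ∀ᶠ x in 𝓝 x₀, ∀ h, ‖fderiv 𝕜 F x h‖ ≤ C * ‖h‖ := by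
  refine ⟨‖fderiv 𝕜 F x₀‖ + 1, by positivity, ?_⟩
  filter_upwards [(hF.continuousAt_fderiv one_ne_zero).norm.eventually_lt continuousAt_const
    (lt_add_one _)] with x hx h
  exact (ContinuousLinearMap.le_opNorm _ h).trans (by gcongr)

namespace Matrix

variable {ι : Type*} [Fintype ι]

lemma abs_trace_mul_le (M H : Matrix ι ι ℝ) :
    |(M * H).trace| ≤ Fintype.card ι ^ 2 * ‖M‖ * ‖H‖ := by
  calc |(M * H).trace| ≤ ∑ i, ∑ k, |M i k| * |H k i| := by
        simp only [trace, diag_apply, mul_apply, ← abs_mul]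
        exact (Finset.abs_sum_le_sum_abs _ _).trans
          (Finset.sum_le_sum fun i _ => Finset.abs_sum_le_sum_abs _ _)
    _ ≤ ∑ _i : ι, ∑ _k : ι, ‖M‖ * ‖H‖ := by
        gcongr with i _ k _
        · exact norm_entry_le_entrywise_sup_norm M
        · exact norm_entry_le_entrywise_sup_norm H
    _ = Fintype.card ι ^ 2 * ‖M‖ * ‖H‖ := by simp [sq, mul_assoc]

variable [DecidableEq ι]

noncomputable def traceMul : Matrix ι ι ℝ →L[ℝ] Matrix ι ι ℝ →L[ℝ] ℝ :=
  LinearMap.toContinuousLinearMap <| LinearMap.toContinuousLinearMap.toLinearMap ∘ₗ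
    (LinearMap.mul ℝ (Matrix ι ι ℝ)).compr₂ (traceLinearMap ι ℝ ℝ)

open scoped RightActions in
lemma hasFDerivAt_trace_pow (A : Matrix ι ι ℝ) (k : ℕ) :
    HasFDerivAt (fun B : Matrix ι ι ℝ => (B ^ k).trace) (traceMul ((k : ℝ) • A ^ (k - 1))) A := by
  -- `HasFDerivAt` only sees the topology, so `hasFDerivAt_pow'` may be borrowed from the
  -- normed ring structure of the (equivalent) `L∞` operator norm
  let _ : NormedRing (Matrix ι ι ℝ) := Matrix.linftyOpNormedRing
  let _ : NormedAlgebra ℝ (Matrix ι ι ℝ) := Matrix.linftyOpNormedAlgebra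
  have hpow := (traceLinearMap ι ℝ ℝ).toContinuousLinearMap.hasFDerivAt.comp A
    (hasFDerivAt_pow' (𝕜 := ℝ) k (x := A))
  have hcyc : ∀ H, ((traceLinearMap ι ℝ ℝ).toContinuousLinearMap.comp
      (∑ i ∈ Finset.range k, A ^ (k.pred - i) •> ContinuousLinearMap.id ℝ _ <• A ^ i)) H
      = (k : ℝ) * (A ^ (k - 1) * H).trace := by
    intro H
    simp only [Nat.pred_eq_sub_one, ContinuousLinearMap.comp_apply, _root_.sum_apply,
      _root_.smul_apply, ContinuousLinearMap.id_apply, smul_eq_mul, MulOpposite.smul_eq_mul_unop,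
      MulOpposite.unop_op, map_sum, LinearMap.coe_toContinuousLinearMap', traceLinearMap_apply]
    rw [Finset.sum_congr rfl fun i hi => ?_, Finset.sum_const, Finset.card_range, nsmul_eq_mul]
    rw [trace_mul_cycle, ← pow_add, Nat.add_sub_cancel' (by grind)]
  refine hpow.congr_fderiv (ContinuousLinearMap.ext fun H => (hcyc H).trans ?_)
  show _ = ((k : ℝ) • A ^ (k - 1) * H).trace
  rw [smul_mul_assoc, trace_smul, smul_eq_mul]

lemma hasFDerivAt_trace_aeval (q : ℝ[X]) (A : Matrix ι ι ℝ) :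
    HasFDerivAt (fun B : Matrix ι ι ℝ => (aeval B q).trace)
      (traceMul (aeval A (derivative q))) A := by
  induction q using Polynomial.induction_on' with
  | add p q hp hq =>
    simp only [map_add, trace_add]
    exact hp.fun_add hq
  | monomial k c =>
    have h := (hasFDerivAt_trace_pow A k).const_mul c
    have hderiv : aeval A (derivative (monomial k c)) = c • (k : ℝ) • A ^ (k - 1) := by
      simp only [derivative_monomial, aeval_monomial, ← Algebra.smul_def, smul_smul]
    rw [hderiv, map_smul]
    simp only [aeval_monomial, ← Algebra.smul_def, trace_smul, smul_eq_mul]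
    exact h

lemma norm_cfc_le {A : Matrix ι ι ℝ} (hA : A.IsHermitian) {g : ℝ → ℝ} {δ : ℝ} (hδ : 0 ≤ δ)
    (hg : ∀ t ∈ spectrum ℝ A, |g t| ≤ δ) : ‖cfc g A‖ ≤ Fintype.card ι * δ := by
  have hU : (hA.eigenvectorUnitary : Matrix ι ι ℝ) ∈ unitaryGroup ι ℝ := hA.eigenvectorUnitary.2
  rw [hA.cfc_eq, IsHermitian.cfc, Unitary.conjStarAlgAut_apply, norm_le_iff (by positivity)]
  generalize (hA.eigenvectorUnitary : Matrix ι ι ℝ) = U at hU ⊢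
  intro i j
  calc _ ≤ ∑ k, ‖U i k‖ * |g (hA.eigenvalues k)| * ‖star U k j‖ := by
        rw [mul_apply]
        simp only [mul_diagonal, Function.comp_apply, RCLike.ofReal_real_eq_id, id,
          ← Real.norm_eq_abs, ← norm_mul]
        exact norm_sum_le _ _
    _ ≤ ∑ _k : ι, 1 * δ * 1 := by
        gcongr with k
        · exact entry_norm_bound_of_unitary hU i k
        · exact hg _ (hA.eigenvalues_mem_spectrum_real k)
        · exact entry_norm_bound_of_unitary (Unitary.star_mem hU) k j
    _ = Fintype.card ι * δ := by simp

lemma PosSemidef.spectrum_subset_Icc {B : Matrix ι ι ℝ} (hB : B.PosSemidef) :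
    spectrum ℝ B ⊆ Icc 0 B.trace := by
  rw [hB.isHermitian.spectrum_real_eq_range_eigenvalues]
  rintro _ ⟨i, rfl⟩
  refine ⟨hB.eigenvalues_nonneg i, ?_⟩
  rw [hB.isHermitian.trace_eq_sum_eigenvalues]
  exact Finset.single_le_sum (fun j _ => hB.eigenvalues_nonneg j) (Finset.mem_univ i)

lemma norm_traceMul_comp_le {E : Type*} [NormedAddCommGroup E] [NormedSpace ℝ E]
    (M : Matrix ι ι ℝ) {T : E →L[ℝ] Matrix ι ι ℝ} {C : ℝ} (hC : 0 ≤ C)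
    (hT : ∀ h, ‖T h‖ ≤ C * ‖h‖) : ‖(traceMul M).comp T‖ ≤ Fintype.card ι ^ 2 * ‖M‖ * C := by
  refine ContinuousLinearMap.opNorm_le_bound _ (by positivity) fun h => ?_
  calc |(M * T h).trace| ≤ Fintype.card ι ^ 2 * ‖M‖ * ‖T h‖ := abs_trace_mul_le M (T h)
    _ ≤ Fintype.card ι ^ 2 * ‖M‖ * (C * ‖h‖) := by gcongr; exact hT h
    _ = _ := by ring

end Matrix

theorem hasFDerivAt_trace_cfc_comp {ι E : Type*} [Fintype ι] [DecidableEq ι]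
    [NormedAddCommGroup E] [NormedSpace ℝ E] {F : E → Matrix ι ι ℝ} {x₀ : E} {f f' : ℝ → ℝ}
    {a b : ℝ} (hF : ContDiffAt ℝ 1 F x₀) (hherm : ∀ᶠ x in 𝓝 x₀, (F x).IsHermitian)
    (hspec : ∀ᶠ x in 𝓝 x₀, spectrum ℝ (F x) ⊆ Icc a b)
    (hf : ∀ t ∈ Icc a b, HasDerivAt f (f' t) t) (hf' : ContinuousOn f' (Icc a b)) :
    HasFDerivAt (fun x => (cfc f (F x)).trace)
      ((traceMul (cfc f' (F x₀))).comp (fderiv ℝ F x₀)) x₀ := by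
  choose q hq using fun j : ℕ =>
    exists_polynomial_near_and_derivative_near hf hf' (Nat.one_div_pos_of_nat (n := j))
  have hdiff : ∀ᶠ x in 𝓝 x₀, HasFDerivAt F (fderiv ℝ F x) x :=
    (hF.eventually (by simp)).mono fun x hx => (hx.differentiableAt one_ne_zero).hasFDerivAt
  obtain ⟨C, hC, hbound⟩ := hF.exists_eventually_norm_fderiv_apply_le
  refine hasFDerivAt_of_tendstoUniformlyOnFilter (l := atTop)
    (f := fun j x => (aeval (F x) (q j)).trace)
    (f' := fun j x => (traceMul (aeval (F x) (derivative (q j)))).comp (fderiv ℝ F x))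
    (g' := fun x => (traceMul (cfc f' (F x))).comp (fderiv ℝ F x)) ?_ ?_ ?_
  · refine tendstoUniformlyOnFilter_of_dist_le
      (u := fun j : ℕ => Fintype.card ι ^ 2 * (Fintype.card ι * (1 / (j + 1))) * C) ?_ ?_
    · simpa using ((tendsto_one_div_add_atTop_nhds_zero_nat.const_mul
        (Fintype.card ι : ℝ)).const_mul ((Fintype.card ι : ℝ) ^ 2)).mul_const C
    · filter_upwards [hherm, hspec, hbound] with x hx hxs hxb j
      have hcfc : aeval (F x) (derivative (q j)) - cfc f' (F x)
          = cfc (fun t => (derivative (q j)).eval t - f' t) (F x) := by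
        rw [← cfc_polynomial _ _ hx.isSelfAdjoint, cfc_sub _ _ _
          ((F x).finite_real_spectrum.continuousOn _) ((F x).finite_real_spectrum.continuousOn _)]
      rw [dist_eq_norm', ← ContinuousLinearMap.sub_comp, ← map_sub, hcfc]
      refine (norm_traceMul_comp_le _ hC hxb).trans ?_
      gcongr
      exact norm_cfc_le hx (by positivity) fun t ht => (hq j t (hxs ht)).2
  · filter_upwards [hdiff.prod_inr atTop] with ⟨j, x⟩ hx
    exact (hasFDerivAt_trace_aeval (q j) (F x)).comp x hx
  · filter_upwards [hherm, hspec] with x hx hxs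
    simp_rw [← cfc_polynomial _ (F x) hx.isSelfAdjoint]
    refine (continuous_id.matrix_trace.tendsto _).comp (tendsto_cfc_fun ?_
      (Eventually.of_forall fun j => (F x).finite_real_spectrum.continuousOn _))
    refine tendstoUniformlyOn_iff_tendstoUniformlyOnFilter.2 (tendstoUniformlyOnFilter_of_dist_le
      tendsto_one_div_add_atTop_nhds_zero_nat (eventually_principal.2 fun t ht j => ?_))
    rw [Real.dist_eq, abs_sub_comm]
    exact (hq j t (hxs ht)).1

lemma spectrum_transpose_mul_self_add_smul_one_subset {m n : Type*} [Fintype m] [Fintype n]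
    [DecidableEq n] (X : Matrix m n ℝ) (γ : ℝ) :
    spectrum ℝ (Xᵀ * X + γ • 1) ⊆ Icc γ (γ + (Xᵀ * X).trace) := by
  have hX : (Xᵀ * X).PosSemidef := by
    simpa using posSemidef_conjTranspose_mul_self X
  rw [← Algebra.algebraMap_eq_smul_one, ← spectrum.add_singleton_eq]
  rintro _ ⟨t, ht, _, rfl, rfl⟩
  have := hX.spectrum_subset_Icc ht
  exact ⟨by linarith [this.1], by linarith [this.2]⟩

theorem smooth_schatten_differentiable_general {m n : ℕ} (γ p : ℝ) (hγ : 0 < γ)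
    (hA : ∀ X : Matrix (Fin m) (Fin n) ℝ,
      (Xᵀ * X + γ • (1 : Matrix (Fin n) (Fin n) ℝ)).IsHermitian) :
    Differentiable ℝ
      (fun X : Matrix (Fin m) (Fin n) ℝ =>
        Matrix.trace ((hA X).cfc (fun t : ℝ => t ^ (p / 2)))) := by
  intro X₀
  have hF : ContDiff ℝ 1 fun X : Matrix (Fin m) (Fin n) ℝ => Xᵀ * X + γ • 1 := by
    refine contDiff_pi.2 fun i => contDiff_pi.2 fun j => ?_
    simp only [Matrix.add_apply, mul_apply, transpose_apply, Matrix.smul_apply]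
    fun_prop
  have hspec : ∀ᶠ X in 𝓝 X₀,
      spectrum ℝ (Xᵀ * X + γ • 1) ⊆ Icc γ (γ + ((X₀ᵀ * X₀).trace + 1)) := by
    have htr : Continuous fun X : Matrix (Fin m) (Fin n) ℝ => (Xᵀ * X).trace := by fun_prop
    filter_upwards [htr.continuousAt.eventually_lt continuousAt_const (lt_add_one _)] with X hX
    exact (spectrum_transpose_mul_self_add_smul_one_subset X γ).trans
      (Icc_subset_Icc_right (by linarith))
  have hpos : ∀ t ∈ Icc γ (γ + ((X₀ᵀ * X₀).trace + 1)), t ≠ 0 := fun t ht =>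
    (hγ.trans_le ht.1).ne'
  simp only [← (hA _).cfc_eq]
  exact (hasFDerivAt_trace_cfc_comp hF.contDiffAt (Eventually.of_forall hA) hspec
    (fun t ht => Real.hasDerivAt_rpow_const (Or.inl (hpos t ht)))
    (fun t ht => (continuousAt_const.mul
      (Real.continuousAt_rpow_const _ _ (Or.inl (hpos t ht)))).continuousWithinAt)).differentiableAt

/-- For `γ > 0` and `p > 0`, the smooth Schatten-p function
`f_p(X) = Tr((XᵀX + γI)^{p/2})`, with the matrix power taken via the spectral
functional calculus, is differentiable on all of `ℝ^{m×n}`. -/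
theorem smooth_schatten_differentiable {m n : ℕ} (γ p : ℝ) (hγ : 0 < γ) (hp : 0 < p)
    (hA : ∀ X : Matrix (Fin m) (Fin n) ℝ,
      (Xᵀ * X + γ • (1 : Matrix (Fin n) (Fin n) ℝ)).IsHermitian) :
    Differentiable ℝ
      (fun X : Matrix (Fin m) (Fin n) ℝ =>
        Matrix.trace ((hA X).cfc (fun t : ℝ => t ^ (p / 2)))) :=
  smooth_schatten_differentiable_general γ p hγ hA
end
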